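/- (Donsker–Varadhan bound on mutual information, finite form.) For finite types X and Z, let p be a joint probability mass function on X × Z with marginals p_X and p_Z, and let f : X × Z → ℝ be any function (a critic). Then the mutual information satisfies I_p(X;Z) ≥ Σ_{(x,z)} p(x,z) · f(x,z) − log( Σ_{(x,z)} p_X(x) · p_Z(z) · exp(f(x,z)) ). -/

import Mathlib

open Finset Real MeasureTheory

noncomputable section

/-- A probability mass function on a finite type. -/
def IsPmf {Ω : Type*} [Fintype Ω] (p : Ω → ℝ) : Prop :=
  (∀ ω, 0 ≤ p ω) ∧ ∑ ω, p ω = 1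

/-- KL divergence between pmfs on a finite type.
(The convention `0 · log (0 / q ω) = 0` holds automatically since `Real.log 0 = 0`.) -/
def KL {Ω : Type*} [Fintype Ω] (p q : Ω → ℝ) : ℝ :=
  ∑ ω, p ω * Real.log (p ω / q ω)

/-- Marginal on the first component of a joint pmf. -/
def margX {X Z : Type*} [Fintype X] [Fintype Z] (p : X × Z → ℝ) (x : X) : ℝ :=
  ∑ z, p (x, z)

/-- Marginal on the second component of a joint pmf. -/
def margZ {X Z : Type*} [Fintype X] [Fintype Z] (p : X × Z → ℝ) (z : Z) : ℝ :=
  ∑ x, p (x, z)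

/-- Conditional pmf of `z` given `x`. -/
def condZ {X Z : Type*} [Fintype X] [Fintype Z] (p : X × Z → ℝ) (x : X) (z : Z) : ℝ :=
  p (x, z) / margX p x

/-- Conditional pmf of `x` given `z`. -/
def condX {X Z : Type*} [Fintype X] [Fintype Z] (p : X × Z → ℝ) (z : Z) (x : X) : ℝ :=
  p (x, z) / margZ p z

/-- Shannon entropy of a pmf on a finite type. -/
def entropy {Ω : Type*} [Fintype Ω] (p : Ω → ℝ) : ℝ :=
  -∑ ω, p ω * Real.log (p ω)

/-- Cross entropy between two pmfs on a finite type. -/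
def crossEnt {Ω : Type*} [Fintype Ω] (p q : Ω → ℝ) : ℝ :=
  -∑ ω, p ω * Real.log (q ω)

/-- Mutual information of a joint pmf on `X × Z`. -/
def mutualInfo {X Z : Type*} [Fintype X] [Fintype Z] (p : X × Z → ℝ) : ℝ :=
  KL p (fun xz => margX p xz.1 * margZ p xz.2)

/-!
Tilting `q` by the critic gives the pmf `r = q · exp f / ∑ q · exp f`, and wherever `p > 0`,
`log (p / q) = log (p / r) + f - log ∑ q · exp f`. Averaging against `p`,
`KL[p ‖ q] = KL[p ‖ r] + E_p f - log ∑ q · exp f`, and `KL[p ‖ r] ≥ 0` by summing the pointwise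
Gibbs inequality `a - b ≤ a log (a / b)`. Mutual information is the case `q = p_X ⊗ p_Z`,
which vanishes only where `p` does because `p (x, z) ≤ p_X x` and `p (x, z) ≤ p_Z z`.
-/

theorem sub_le_mul_log_div {a b : ℝ} (ha : 0 ≤ a) (hb : 0 ≤ b) (hab : b = 0 → a = 0) :
    a - b ≤ a * Real.log (a / b) := by
  rcases ha.eq_or_lt with rfl | ha
  · simpa using hb
  have hb : 0 < b := hb.lt_of_ne fun h => ha.ne' (hab h.symm)
  have h := Real.one_sub_inv_le_log_of_pos (div_pos ha hb)
  calc a - b = a * (1 - (a / b)⁻¹) := by field_simp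
    _ ≤ a * Real.log (a / b) := mul_le_mul_of_nonneg_left h ha.le

section KL

variable {Ω : Type*} [Fintype Ω]

theorem sum_sub_sum_le_KL {p q : Ω → ℝ} (hp : ∀ ω, 0 ≤ p ω) (hq : ∀ ω, 0 ≤ q ω)
    (hpq : ∀ ω, q ω = 0 → p ω = 0) : ∑ ω, p ω - ∑ ω, q ω ≤ KL p q := by
  rw [← Finset.sum_sub_distrib]
  exact Finset.sum_le_sum fun ω _ => sub_le_mul_log_div (hp ω) (hq ω) (hpq ω)

def tilt (q f : Ω → ℝ) (ω : Ω) : ℝ :=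
  q ω * Real.exp (f ω) / ∑ ω', q ω' * Real.exp (f ω')

theorem sum_tilt {q : Ω → ℝ} (f : Ω → ℝ) (h : ∑ ω, q ω * Real.exp (f ω) ≠ 0) :
    ∑ ω, tilt q f ω = 1 := by
  simp only [tilt, ← Finset.sum_div, div_self h]

theorem IsPmf.sum_mul_exp_pos {p q : Ω → ℝ} (hp : IsPmf p) (hq : ∀ ω, 0 ≤ q ω)
    (hpq : ∀ ω, q ω = 0 → p ω = 0) (f : Ω → ℝ) : 0 < ∑ ω, q ω * Real.exp (f ω) := by
  obtain ⟨ω, -, hω⟩ := Finset.exists_ne_zero_of_sum_ne_zero (hp.2.trans_ne one_ne_zero)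
  have hqω : 0 < q ω := (hq ω).lt_of_ne fun h => hω (hpq ω h.symm)
  exact Finset.sum_pos' (fun ω _ => mul_nonneg (hq ω) (Real.exp_pos _).le)
    ⟨ω, Finset.mem_univ ω, mul_pos hqω (Real.exp_pos _)⟩

theorem KL_eq_KL_tilt_add {p q : Ω → ℝ} (hp : IsPmf p) (hq : ∀ ω, 0 ≤ q ω)
    (hpq : ∀ ω, q ω = 0 → p ω = 0) (f : Ω → ℝ) :
    KL p q = KL p (tilt q f) + (∑ ω, p ω * f ω - Real.log (∑ ω, q ω * Real.exp (f ω))) := by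
  have hS := hp.sum_mul_exp_pos hq hpq f
  have hpoint : ∀ ω, p ω * Real.log (p ω / q ω) = p ω * Real.log (p ω / tilt q f ω) +
      (p ω * f ω - p ω * Real.log (∑ ω, q ω * Real.exp (f ω))) := by
    intro ω
    rcases (hp.1 ω).eq_or_lt with h0 | hpos
    · simp [← h0]
    have hqω : 0 < q ω := (hq ω).lt_of_ne fun h => hpos.ne' (hpq ω h.symm)
    rw [tilt, Real.log_div hpos.ne' hqω.ne', Real.log_div hpos.ne' (by positivity),
      Real.log_div (by positivity) hS.ne', Real.log_mul hqω.ne' (Real.exp_pos _).ne',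
      Real.log_exp]
    ring
  rw [KL, KL, Finset.sum_congr rfl fun ω _ => hpoint ω, Finset.sum_add_distrib,
    Finset.sum_sub_distrib, ← Finset.sum_mul, hp.2, one_mul]

theorem KL_tilt_nonneg {p q : Ω → ℝ} (hp : IsPmf p) (hq : ∀ ω, 0 ≤ q ω)
    (hpq : ∀ ω, q ω = 0 → p ω = 0) (f : Ω → ℝ) : 0 ≤ KL p (tilt q f) := by
  have hS := hp.sum_mul_exp_pos hq hpq f
  have htilt0 : ∀ ω, 0 ≤ tilt q f ω := fun ω =>
    div_nonneg (mul_nonneg (hq ω) (Real.exp_pos _).le) hS.le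
  have hptilt : ∀ ω, tilt q f ω = 0 → p ω = 0 := fun ω h => by
    rw [tilt, div_eq_zero_iff, mul_eq_zero] at h
    exact hpq ω (h.resolve_right hS.ne' |>.resolve_right (Real.exp_pos _).ne')
  simpa [hp.2, sum_tilt f hS.ne'] using sum_sub_sum_le_KL hp.1 htilt0 hptilt

theorem donsker_varadhan {p q : Ω → ℝ} (hp : IsPmf p) (hq : ∀ ω, 0 ≤ q ω)
    (hpq : ∀ ω, q ω = 0 → p ω = 0) (f : Ω → ℝ) :
    ∑ ω, p ω * f ω - Real.log (∑ ω, q ω * Real.exp (f ω)) ≤ KL p q := by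
  rw [KL_eq_KL_tilt_add hp hq hpq f]
  linarith [KL_tilt_nonneg hp hq hpq f]

end KL

section Marginals

variable {X Z : Type*} [Fintype X] [Fintype Z] {p : X × Z → ℝ}

theorem le_margX (hp : ∀ xz, 0 ≤ p xz) (x : X) (z : Z) : p (x, z) ≤ margX p x :=
  Finset.single_le_sum (f := fun z => p (x, z)) (fun _ _ => hp _) (Finset.mem_univ z)

theorem le_margZ (hp : ∀ xz, 0 ≤ p xz) (x : X) (z : Z) : p (x, z) ≤ margZ p z :=
  Finset.single_le_sum (f := fun x => p (x, z)) (fun _ _ => hp _) (Finset.mem_univ x)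

theorem margX_mul_margZ_nonneg (hp : ∀ xz, 0 ≤ p xz) (xz : X × Z) :
    0 ≤ margX p xz.1 * margZ p xz.2 :=
  mul_nonneg ((hp xz).trans (le_margX hp _ _)) ((hp xz).trans (le_margZ hp _ _))

theorem eq_zero_of_margX_mul_margZ_eq_zero (hp : ∀ xz, 0 ≤ p xz) (xz : X × Z)
    (h : margX p xz.1 * margZ p xz.2 = 0) : p xz = 0 := by
  refine le_antisymm ?_ (hp xz)
  rcases mul_eq_zero.mp h with h | h
  · exact h ▸ le_margX hp xz.1 xz.2
  · exact h ▸ le_margZ hp xz.1 xz.2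

end Marginals

/-- Donsker–Varadhan bound on mutual information (finite form): for any critic `f`,
`I(X;Z) ≥ E_p[f] − log E_{p_X ⊗ p_Z}[exp f]`. -/
theorem donsker_varadhan_mutualInfo {X Z : Type*} [Fintype X] [Fintype Z]
    (p : X × Z → ℝ) (hp : IsPmf p) (f : X × Z → ℝ) :
    mutualInfo p ≥
      ∑ xz, p xz * f xz -
        Real.log (∑ xz : X × Z, margX p xz.1 * margZ p xz.2 * Real.exp (f xz)) :=
  donsker_varadhan hp (margX_mul_margZ_nonneg hp.1) (eq_zero_of_margX_mul_margZ_eq_zero hp.1) f
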